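/- Multivariate Gaussian factorization identity underlying Lemma 2: let Ψ be an n×n real positive definite matrix, d, μ, y ∈ ℝⁿ, and t ∈ ℝ. Set Σ = Ψ + d·dᵀ, η = dᵀΨ⁻¹(y−μ)/(1 + dᵀΨ⁻¹d) and ζ² = 1/(1 + dᵀΨ⁻¹d). Then φₙ(y; μ + t·d, Ψ)·φ(t; 0, 1) = φₙ(y; μ, Σ)·φ(t; η, ζ²), where φₙ(y; m, V) = (2π)^{-n/2}·(det V)^{-1/2}·exp(-½·(y−m)ᵀV⁻¹(y−m)). -/

import Mathlib

open Real Matrix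

/-- The normal density with mean `m` and variance `s2 > 0`:
`φ(x; m, s²) = (2πs²)^{-1/2} exp(-(x−m)²/(2s²))`. -/
noncomputable def normalPDF (m s2 x : ℝ) : ℝ :=
  (2 * π * s2) ^ (-(1 : ℝ) / 2) * Real.exp (-(x - m) ^ 2 / (2 * s2))

/-- The `n`-dimensional normal density with mean `m` and positive definite covariance `V`:
`φₙ(y; m, V) = (2π)^{-n/2} (det V)^{-1/2} exp(-½ (y−m)ᵀ V⁻¹ (y−m))`. -/
noncomputable def mvNormalPDF {n : ℕ} (m : Fin n → ℝ) (V : Matrix (Fin n) (Fin n) ℝ)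
    (y : Fin n → ℝ) : ℝ :=
  (2 * π) ^ (-(n : ℝ) / 2) * V.det ^ (-(1 : ℝ) / 2) *
    Real.exp (-(1 / 2) * ((y - m) ⬝ᵥ (V⁻¹ *ᵥ (y - m))))

/-!
With `c = dᵀΨ⁻¹d` and `a = dᵀΨ⁻¹(y − μ)`, shifting the mean by `t • d` multiplies
`φₙ(y; μ, Ψ)` by `exp(t a − t² c / 2)`, and completing the square in `t` turns
`φ(t; 0, 1) · exp(t a − t² c / 2)` into `(1 + c)^{-1/2} exp(a² / (2(1 + c))) · φ(t; η, ζ²)`.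
The same `t`-free factor is what the rank-one update `Ψ ↦ Ψ + d dᵀ` does to `φₙ(y; μ, ·)`:
by the matrix determinant lemma `det Σ = det Ψ · (1 + c)`, and by the Sherman–Morrison
formula the quadratic form of `Σ⁻¹` at `y − μ` is that of `Ψ⁻¹` minus `a² / (1 + c)`.
-/

namespace Matrix

variable {ι K : Type*} [Fintype ι]

theorem IsSymm.dotProduct_mulVec_comm [CommSemiring K] {A : Matrix ι ι K} (hA : A.IsSymm)
    (u v : ι → K) : u ⬝ᵥ (A *ᵥ v) = v ⬝ᵥ (A *ᵥ u) := by
  rw [dotProduct_mulVec, ← mulVec_transpose, hA.eq, dotProduct_comm]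

variable [DecidableEq ι]

theorem PosDef.one_add_dotProduct_inv_mulVec_pos {A : Matrix ι ι ℝ} (hA : A.PosDef)
    (v : ι → ℝ) : 0 < 1 + v ⬝ᵥ (A⁻¹ *ᵥ v) := by
  have hnonneg := hA.inv.posSemidef.dotProduct_mulVec_nonneg v
  rw [star_trivial] at hnonneg
  linarith

theorem det_add_vecMulVec [CommRing K] {A : Matrix ι ι K} (hA : IsUnit A.det) (u v : ι → K) :
    (A + vecMulVec u v).det = A.det * (1 + v ⬝ᵥ (A⁻¹ *ᵥ u)) := by
  have hfac : A + vecMulVec u v = A * (1 + vecMulVec (A⁻¹ *ᵥ u) v) := by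
    rw [← mul_vecMulVec, Matrix.mul_add, Matrix.mul_one, mul_nonsing_inv_cancel_left _ _ hA]
  rw [hfac, det_mul, vecMulVec_eq (Fin 1), det_one_add_replicateCol_mul_replicateRow]

theorem inv_add_vecMulVec [Field K] {A : Matrix ι ι K} (hA : IsUnit A.det) (u v : ι → K)
    (h : 1 + v ⬝ᵥ (A⁻¹ *ᵥ u) ≠ 0) :
    (A + vecMulVec u v)⁻¹ =
      A⁻¹ - (1 + v ⬝ᵥ (A⁻¹ *ᵥ u))⁻¹ • vecMulVec (A⁻¹ *ᵥ u) (v ᵥ* A⁻¹) := by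
  set k := (1 + v ⬝ᵥ (A⁻¹ *ᵥ u))⁻¹ with hk
  have hk_add : k + k * (v ⬝ᵥ (A⁻¹ *ᵥ u)) = 1 := by rw [hk]; field_simp
  apply inv_eq_right_inv
  rw [Matrix.add_mul, Matrix.mul_sub, Matrix.mul_sub, mul_nonsing_inv _ hA, Matrix.mul_smul,
    Matrix.mul_smul, mul_vecMulVec, mulVec_mulVec, mul_nonsing_inv _ hA, one_mulVec,
    vecMulVec_mul, vecMulVec_mul_vecMulVec, vecMulVec_smul, smul_smul]
  calc 1 - k • vecMulVec u (v ᵥ* A⁻¹) +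
        (vecMulVec u (v ᵥ* A⁻¹) - (k * (v ⬝ᵥ (A⁻¹ *ᵥ u))) • vecMulVec u (v ᵥ* A⁻¹))
      = 1 + (1 - (k + k * (v ⬝ᵥ (A⁻¹ *ᵥ u)))) • vecMulVec u (v ᵥ* A⁻¹) := by module
    _ = 1 := by rw [hk_add, sub_self, zero_smul, add_zero]

theorem dotProduct_inv_add_vecMulVec_mulVec [Field K] {A : Matrix ι ι K} (hA : IsUnit A.det)
    (u v x w : ι → K) (h : 1 + v ⬝ᵥ (A⁻¹ *ᵥ u) ≠ 0) :
    x ⬝ᵥ ((A + vecMulVec u v)⁻¹ *ᵥ w) =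
      x ⬝ᵥ (A⁻¹ *ᵥ w) - x ⬝ᵥ (A⁻¹ *ᵥ u) * (v ⬝ᵥ (A⁻¹ *ᵥ w)) / (1 + v ⬝ᵥ (A⁻¹ *ᵥ u)) := by
  rw [inv_add_vecMulVec hA u v h, sub_mulVec, smul_mulVec, vecMulVec_mulVec,
    ← dotProduct_mulVec, dotProduct_sub, dotProduct_smul, dotProduct_smul]
  simp only [smul_eq_mul, MulOpposite.smul_eq_mul_unop, MulOpposite.unop_op]
  ring

end Matrix

theorem normalPDF_zero_one_mul_exp {a c : ℝ} (hc : 0 < 1 + c) (t : ℝ) :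
    normalPDF 0 1 t * exp (t * a - t ^ 2 * c / 2) =
      (1 + c) ^ (-(1 : ℝ) / 2) * exp (a ^ 2 / (2 * (1 + c))) *
        normalPDF (a / (1 + c)) (1 / (1 + c)) t := by
  have hvar : (2 * π * (1 / (1 + c))) ^ (-(1 : ℝ) / 2) =
      (2 * π) ^ (-(1 : ℝ) / 2) * ((1 + c) ^ (-(1 : ℝ) / 2))⁻¹ := by
    rw [mul_rpow (by positivity) (by positivity), one_div, inv_rpow hc.le]
  have hsquare : -(t - 0) ^ 2 / (2 * 1) + (t * a - t ^ 2 * c / 2) =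
      a ^ 2 / (2 * (1 + c)) + -(t - a / (1 + c)) ^ 2 / (2 * (1 / (1 + c))) := by
    field_simp
    ring
  have hpos : 0 < (1 + c) ^ (-(1 : ℝ) / 2) := rpow_pos_of_pos hc _
  rw [normalPDF, normalPDF, hvar, mul_one, mul_assoc, ← exp_add, hsquare, exp_add]
  field_simp

theorem mvNormalPDF_add_smul {n : ℕ} {Ψ : Matrix (Fin n) (Fin n) ℝ} (hΨ : Ψ.IsSymm)
    (μ d y : Fin n → ℝ) (t : ℝ) :
    mvNormalPDF (μ + t • d) Ψ y = mvNormalPDF μ Ψ y *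
      exp (t * (d ⬝ᵥ (Ψ⁻¹ *ᵥ (y - μ))) - t ^ 2 * (d ⬝ᵥ (Ψ⁻¹ *ᵥ d)) / 2) := by
  have hquad : (y - μ - t • d) ⬝ᵥ (Ψ⁻¹ *ᵥ (y - μ - t • d)) = (y - μ) ⬝ᵥ (Ψ⁻¹ *ᵥ (y - μ)) -
      2 * t * (d ⬝ᵥ (Ψ⁻¹ *ᵥ (y - μ))) + t ^ 2 * (d ⬝ᵥ (Ψ⁻¹ *ᵥ d)) := by
    rw [mulVec_sub, mulVec_smul, sub_dotProduct, dotProduct_sub, dotProduct_sub,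
      smul_dotProduct, smul_dotProduct, dotProduct_smul, dotProduct_smul,
      hΨ.inv.dotProduct_mulVec_comm (y - μ) d, smul_eq_mul, smul_eq_mul, smul_eq_mul]
    ring
  rw [mvNormalPDF, mvNormalPDF, sub_add_eq_sub_sub, hquad, mul_assoc (_ * _) (exp _),
    ← exp_add]
  ring_nf

theorem mvNormalPDF_add_vecMulVec {n : ℕ} {Ψ : Matrix (Fin n) (Fin n) ℝ} (hΨ : Ψ.PosDef)
    (μ d y : Fin n → ℝ) :
    mvNormalPDF μ (Ψ + vecMulVec d d) y =
      (1 + d ⬝ᵥ (Ψ⁻¹ *ᵥ d)) ^ (-(1 : ℝ) / 2) *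
        exp ((d ⬝ᵥ (Ψ⁻¹ *ᵥ (y - μ))) ^ 2 / (2 * (1 + d ⬝ᵥ (Ψ⁻¹ *ᵥ d)))) *
          mvNormalPDF μ Ψ y := by
  have hdet : IsUnit Ψ.det := hΨ.det_pos.ne'.isUnit
  have hc := hΨ.one_add_dotProduct_inv_mulVec_pos d
  have hsymm : Ψ⁻¹.IsSymm := (isHermitian_iff_isSymm.mp hΨ.isHermitian).inv
  have exp_neg_half_mul_sub (q a c : ℝ) :
      exp (-(1 / 2) * (q - a * a / c)) = exp (a ^ 2 / (2 * c)) * exp (-(1 / 2) * q) := by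
    rw [← exp_add]
    ring_nf
  rw [mvNormalPDF, mvNormalPDF, det_add_vecMulVec hdet, mul_rpow hΨ.det_pos.le hc.le,
    dotProduct_inv_add_vecMulVec_mulVec hdet _ _ _ _ hc.ne',
    hsymm.dotProduct_mulVec_comm (y - μ) d, exp_neg_half_mul_sub]
  ring

/-- Multivariate Gaussian factorization identity underlying Lemma 2: for `Ψ` positive
definite, with `Σ = Ψ + d·dᵀ`, `η = dᵀΨ⁻¹(y−μ)/(1 + dᵀΨ⁻¹d)` and `ζ² = 1/(1 + dᵀΨ⁻¹d)`,
`φₙ(y; μ + t·d, Ψ)·φ(t; 0, 1) = φₙ(y; μ, Σ)·φ(t; η, ζ²)`. -/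
theorem mv_gaussian_factorization {n : ℕ}
    (Ψ : Matrix (Fin n) (Fin n) ℝ) (hΨ : Ψ.PosDef)
    (d μ y : Fin n → ℝ) (t : ℝ)
    (η ζ2 : ℝ)
    (hη : η = d ⬝ᵥ (Ψ⁻¹ *ᵥ (y - μ)) / (1 + d ⬝ᵥ (Ψ⁻¹ *ᵥ d)))
    (hζ : ζ2 = 1 / (1 + d ⬝ᵥ (Ψ⁻¹ *ᵥ d))) :
    mvNormalPDF (μ + t • d) Ψ y * normalPDF 0 1 t =
      mvNormalPDF μ (Ψ + vecMulVec d d) y * normalPDF η ζ2 t := by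
  rw [mvNormalPDF_add_smul (isHermitian_iff_isSymm.mp hΨ.isHermitian), mul_assoc,
    mul_comm (exp _), normalPDF_zero_one_mul_exp (hΨ.one_add_dotProduct_inv_mulVec_pos d),
    mvNormalPDF_add_vecMulVec hΨ, hη, hζ]
  ring
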